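/- Let n ≥ 1, let H be an n×n complex Hermitian positive semidefinite matrix with λ_max(H) > 0, let P > 0, and suppose R★ is an n×n complex positive semidefinite matrix with Re(tr R★) ≤ P such that Re(tr(H·R★)) = P · λ_max(H). Then Re(tr R★) = P and H · R★ = λ_max(H) · R★ (i.e., the range of R★ is contained in the eigenspace of H for its largest eigenvalue). -/

import Mathlib

open Matrix ComplexOrder

/-!
With `λ = λ_max(H)`, the matrix `A = λ • 1 - H` is positive semidefinite, and the trace of a
product of two positive semidefinite matrices is nonnegative. Hence
`0 ≤ Re tr (A R★) = λ Re tr R★ - P λ ≤ 0`, which forces `Re tr R★ = P` and `tr (A R★) = 0`.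
Writing `A = Cᴴ C` and `R★ = Dᴴ D`, `tr (A R★) = tr ((C Dᴴ)ᴴ (C Dᴴ))`, so its vanishing gives
`C Dᴴ = 0`, hence `A R★ = 0`, i.e. `H R★ = λ R★`.
-/

/-- The largest eigenvalue of a Hermitian matrix. -/
noncomputable def lamMax {n : ℕ} {H : Matrix (Fin n) (Fin n) ℂ}
    (hH : H.IsHermitian) : ℝ := ⨆ i, hH.eigenvalues i

namespace Matrix

variable {n 𝕜 : Type*} [Fintype n] [RCLike 𝕜]

lemma PosSemidef.exists_eq_conjTranspose_mul_self {A : Matrix n n 𝕜} (hA : A.PosSemidef) :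
    ∃ C : Matrix n n 𝕜, A = Cᴴ * C := by
  classical
  open scoped MatrixOrder in
  exact CStarAlgebra.nonneg_iff_eq_star_mul_self.mp hA.nonneg

lemma trace_conjTranspose_mul_self_mul_conjTranspose_mul_self (C D : Matrix n n 𝕜) :
    trace (Cᴴ * C * (Dᴴ * D)) = trace ((C * Dᴴ)ᴴ * (C * Dᴴ)) := by
  rw [← Matrix.mul_assoc, trace_mul_comm, conjTranspose_mul, conjTranspose_conjTranspose]
  simp only [Matrix.mul_assoc]

lemma PosSemidef.trace_mul_nonneg {A B : Matrix n n 𝕜} (hA : A.PosSemidef) (hB : B.PosSemidef) :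
    0 ≤ trace (A * B) := by
  obtain ⟨C, rfl⟩ := hA.exists_eq_conjTranspose_mul_self
  obtain ⟨D, rfl⟩ := hB.exists_eq_conjTranspose_mul_self
  rw [trace_conjTranspose_mul_self_mul_conjTranspose_mul_self]
  exact (posSemidef_conjTranspose_mul_self _).trace_nonneg

lemma PosSemidef.mul_eq_zero_of_trace_mul_eq_zero {A B : Matrix n n 𝕜} (hA : A.PosSemidef)
    (hB : B.PosSemidef) (h : trace (A * B) = 0) : A * B = 0 := by
  obtain ⟨C, rfl⟩ := hA.exists_eq_conjTranspose_mul_self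
  obtain ⟨D, rfl⟩ := hB.exists_eq_conjTranspose_mul_self
  rw [trace_conjTranspose_mul_self_mul_conjTranspose_mul_self,
    trace_conjTranspose_mul_self_eq_zero_iff] at h
  rw [Matrix.mul_assoc, ← Matrix.mul_assoc C, h, Matrix.zero_mul, Matrix.mul_zero]

lemma IsHermitian.posSemidef_smul_one_sub [DecidableEq n] {H : Matrix n n 𝕜} (hH : H.IsHermitian)
    {r : ℝ} (hr : ∀ i, hH.eigenvalues i ≤ r) : ((r : 𝕜) • 1 - H).PosSemidef := by
  open scoped MatrixOrder in
  have : H ≤ algebraMap ℝ _ r := le_algebraMap_of_spectrum_le (by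
    rintro x hx
    obtain ⟨i, rfl⟩ := hH.spectrum_real_eq_range_eigenvalues ▸ hx
    exact hr i)
  rwa [Matrix.le_iff, Algebra.algebraMap_eq_smul_one, RCLike.real_smul_eq_coe_smul (K := 𝕜)] at this

end Matrix

theorem stmt_2_general {n : ℕ} {H : Matrix (Fin n) (Fin n) ℂ}
    (hH : H.PosSemidef) (hlam : 0 < lamMax hH.1) {P : ℝ}
    {Rstar : Matrix (Fin n) (Fin n) ℂ} (hR : Rstar.PosSemidef)
    (htr : (Matrix.trace Rstar).re ≤ P)
    (hopt : (Matrix.trace (H * Rstar)).re = P * lamMax hH.1) :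
    (Matrix.trace Rstar).re = P ∧ H * Rstar = (lamMax hH.1 : ℂ) • Rstar := by
  set lam := lamMax hH.1
  set A : Matrix (Fin n) (Fin n) ℂ := (lam : ℂ) • 1 - H
  have hA : A.PosSemidef :=
    hH.1.posSemidef_smul_one_sub fun i => le_ciSup (Set.finite_range _).bddAbove i
  have hAR : trace (A * Rstar) = lam * trace Rstar - trace (H * Rstar) := by
    simp only [A, sub_mul, smul_mul, Matrix.one_mul, trace_sub, trace_smul, smul_eq_mul]
  obtain ⟨hre, him⟩ := Complex.le_def.mp (hA.trace_mul_nonneg hR)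
  have hre' : 0 ≤ lam * (trace Rstar).re - P * lam := by simpa [hAR, hopt] using hre
  have hfull : (trace Rstar).re = P := by nlinarith
  have hzero : trace (A * Rstar) = 0 := by
    apply Complex.ext
    · simp [hAR, hopt, hfull, mul_comm]
    · simpa using him.symm
  refine ⟨hfull, ?_⟩
  have := hA.mul_eq_zero_of_trace_mul_eq_zero hR hzero
  rwa [sub_mul, smul_mul, Matrix.one_mul, sub_eq_zero, eq_comm] at this

/-- Proposition 1, converse/structure part: any maximizer of the
trace-maximization problem (P2-I) uses full power and is supported on the top
eigenspace of `H`. -/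
theorem stmt_2 {n : ℕ} (hn : 1 ≤ n) {H : Matrix (Fin n) (Fin n) ℂ}
    (hH : H.PosSemidef) (hlam : 0 < lamMax hH.1) {P : ℝ} (hP : 0 < P)
    {Rstar : Matrix (Fin n) (Fin n) ℂ} (hR : Rstar.PosSemidef)
    (htr : (Matrix.trace Rstar).re ≤ P)
    (hopt : (Matrix.trace (H * Rstar)).re = P * lamMax hH.1) :
    (Matrix.trace Rstar).re = P ∧ H * Rstar = (lamMax hH.1 : ℂ) • Rstar :=
  stmt_2_general hH hlam hR htr hopt
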